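/- arXiv:1406.0005 — 5 statements merged into one kernel-verified Lean document; each statement's English description precedes it below -/
import Mathlib

section
/- Let X be uniform on B(S₀,R₀) ⊂ ℝ³, P at distance R₁ from S₀ with R₁ ≥ R₀ > 0, and D = ‖P - X‖₂. For R₁ - R₀ ≤ d ≤ R₁ + R₀, P(D ≤ d) = [h₁(d)²(3d - h₁(d)) + h₂(d)²(3R₀ - h₂(d))]/(4R₀³), where h₁(d) = d - R₁ + (R₀² + R₁² - d²)/(2R₁) and h₂(d) = R₀ - (R₀² + R₁² - d²)/(2R₁). -/
/-!
Move `S₀` to the origin and `P` onto the first coordinate axis by an isometry; the lens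
`B(S₀, R₀) ∩ B(P, d)` is then a solid of revolution whose slice at abscissa `t` is a disc of
squared radius `min (R₀² - t²) (d² - (t - R₁)²)`. The two spheres meet in the plane
`t = c := (R₀² + R₁² - d²) / (2 R₁)`, and Cavalieri's principle splits the volume into a cap
of `B(P, d)` of height `h₁ = d - R₁ + c` and a cap of `B(S₀, R₀)` of height `h₂ = R₀ - c`.
Dividing by `vol B(S₀, R₀) = 4πR₀³/3` gives the distribution function.
-/

open Real MeasureTheory Metric Set

noncomputable def sphericalCapVolume (r h : ℝ) : ℝ := π * h ^ 2 * (3 * r - h) / 3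

lemma integral_pi_mul_sq_sub_sq (r h : ℝ) :
    ∫ t in (r - h)..r, π * (r ^ 2 - t ^ 2) = sphericalCapVolume r h := by
  simp only [intervalIntegral.integral_const_mul, intervalIntegrable_const,
    intervalIntegral.intervalIntegrable_pow, intervalIntegral.integral_sub,
    intervalIntegral.integral_const, sub_sub_cancel, smul_eq_mul, integral_pow, Nat.reduceAdd,
    Nat.cast_ofNat, sphericalCapVolume]
  ring

lemma lintegral_ofReal_eq_ofReal_intervalIntegral {f : ℝ → ℝ} {a b : ℝ} (hab : a ≤ b)
    (hf : IntegrableOn f (Icc a b)) (hpos : ∀ t ∈ Icc a b, 0 ≤ f t)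
    (hneg : ∀ t ∉ Icc a b, f t ≤ 0) :
    ∫⁻ t, ENNReal.ofReal (f t) = ENNReal.ofReal (∫ t in a..b, f t) := by
  have hsupp : (fun t => ENNReal.ofReal (f t)) =
      (Icc a b).indicator fun t => ENNReal.ofReal (f t) :=
    funext fun t => by
      by_cases ht : t ∈ Icc a b
      · rw [indicator_of_mem ht]
      · rw [indicator_of_notMem ht, ENNReal.ofReal_of_nonpos (hneg t ht)]
  rw [hsupp, lintegral_indicator measurableSet_Icc, intervalIntegral.integral_of_le hab,
    ← integral_Icc_eq_integral_Ioc, ofReal_integral_eq_lintegral_ofReal hf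
      ((ae_restrict_iff' measurableSet_Icc).2 (ae_of_all _ hpos))]

lemma volume_setOf_sq_add_sq_le (m : ℝ) :
    volume {z : Fin 2 → ℝ | z 0 ^ 2 + z 1 ^ 2 ≤ m} = ENNReal.ofReal (π * m) := by
  rcases lt_or_ge m 0 with hm | hm
  · have hempty : {z : Fin 2 → ℝ | z 0 ^ 2 + z 1 ^ 2 ≤ m} = ∅ :=
      eq_empty_of_forall_notMem fun z hz => by
        nlinarith [sq_nonneg (z 0), sq_nonneg (z 1), hz.out]
    rw [hempty, measure_empty, ENNReal.ofReal_of_nonpos (by nlinarith [pi_pos])]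
  · have hdisk : {z : Fin 2 → ℝ | z 0 ^ 2 + z 1 ^ 2 ≤ m} =
        WithLp.toLp 2 ⁻¹' closedBall (0 : EuclideanSpace ℝ (Fin 2)) √m := by
      ext z
      simp [EuclideanSpace.norm_eq, Fin.sum_univ_two, Real.sqrt_le_sqrt_iff hm]
    rw [hdisk, (PiLp.volume_preserving_toLp (Fin 2)).measure_preimage
      measurableSet_closedBall.nullMeasurableSet, EuclideanSpace.volume_closedBall_fin_two,
      ← ENNReal.ofReal_pow (Real.sqrt_nonneg m), Real.sq_sqrt hm, ← ENNReal.ofReal_mul hm,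
      mul_comm]

lemma volume_solid_of_revolution {ρ : ℝ → ℝ} (hρ : Measurable ρ) :
    volume {y : EuclideanSpace ℝ (Fin 3) | y 1 ^ 2 + y 2 ^ 2 ≤ ρ (y 0)} =
      ∫⁻ t, ENNReal.ofReal (π * ρ t) := by
  set B : Set (ℝ × (Fin 2 → ℝ)) := {p | p.2 0 ^ 2 + p.2 1 ^ 2 ≤ ρ p.1}
  have hB : MeasurableSet B := measurableSet_le (by fun_prop) (hρ.comp measurable_fst)
  have hS : MeasurableSet {y : EuclideanSpace ℝ (Fin 3) | y 1 ^ 2 + y 2 ^ 2 ≤ ρ (y 0)} :=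
    measurableSet_le (by fun_prop) (hρ.comp (by fun_prop))
  have hpre : WithLp.toLp 2 ⁻¹' {y : EuclideanSpace ℝ (Fin 3) | y 1 ^ 2 + y 2 ^ 2 ≤ ρ (y 0)} =
      MeasurableEquiv.piFinSuccAbove (fun _ : Fin 3 => ℝ) 0 ⁻¹' B := rfl
  rw [← (PiLp.volume_preserving_toLp (Fin 3)).measure_preimage hS.nullMeasurableSet, hpre,
    (volume_preserving_piFinSuccAbove (fun _ : Fin 3 => ℝ) 0).measure_preimage
      hB.nullMeasurableSet, Measure.volume_eq_prod, Measure.prod_apply hB]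
  exact lintegral_congr fun t => volume_setOf_sq_add_sq_le (ρ t)

lemma volume_closedBall_inter_closedBall_eq_smul {E : Type*} [NormedAddCommGroup E]
    [InnerProductSpace ℝ E] [FiniteDimensional ℝ E] [MeasurableSpace E] [BorelSpace E]
    {e : E} (he : ‖e‖ = 1) (x y : E) (r s : ℝ) :
    volume (closedBall x r ∩ closedBall y s) =
      volume (closedBall 0 r ∩ closedBall (dist x y • e) s) := by
  set ρ := Submodule.reflection (ℝ ∙ (y - x - dist x y • e))ᗮ
  have hρ : ρ (y - x) = dist x y • e := Submodule.reflection_sub (by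
    rw [norm_smul, he, mul_one, Real.norm_of_nonneg dist_nonneg, dist_comm, dist_eq_norm])
  have hg : Isometry fun z => ρ (z - x) := ρ.isometry.comp (IsometryEquiv.subRight x).isometry
  have hmp : MeasurePreserving (fun z => ρ (z - x)) :=
    ρ.measurePreserving.comp (measurePreserving_sub_right volume x)
  have hx := hg.preimage_closedBall x r
  have hy := hg.preimage_closedBall y s
  simp only [sub_self, map_zero, hρ] at hx hy
  rw [← hx, ← hy, ← preimage_inter, hmp.measure_preimage
    (measurableSet_closedBall.inter measurableSet_closedBall).nullMeasurableSet]

lemma closedBall_zero_inter_closedBall_smul_single {a r s : ℝ} (hr : 0 ≤ r) (hs : 0 ≤ s) :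
    closedBall (0 : EuclideanSpace ℝ (Fin 3)) r ∩ closedBall (a • EuclideanSpace.single 0 1) s =
      {y | y 1 ^ 2 + y 2 ^ 2 ≤ min (r ^ 2 - y 0 ^ 2) (s ^ 2 - (y 0 - a) ^ 2)} := by
  ext y
  simp only [Fin.isValue, mem_inter_iff, mem_closedBall, dist_zero_right, EuclideanSpace.norm_eq,
    norm_eq_abs, sq_abs, Fin.sum_univ_three, sqrt_le_iff, hr, true_and, EuclideanSpace.dist_eq,
    PiLp.smul_apply, PiLp.single_apply, smul_eq_mul, mul_ite, mul_one, mul_zero, dist_eq,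
    ↓reduceIte, one_ne_zero, sub_zero, Fin.reduceEq, hs, le_inf_iff, mem_ofPred_eq]
  constructor <;> rintro ⟨h₁, h₂⟩ <;> constructor <;> linarith

lemma integral_pi_mul_min_sq_sub_sq {a r s c : ℝ} (ha : 0 < a) (hc₀ : a - s ≤ c) (hc₁ : c ≤ r)
    (hc : c = (r ^ 2 + a ^ 2 - s ^ 2) / (2 * a)) :
    ∫ t in (a - s)..r, π * min (r ^ 2 - t ^ 2) (s ^ 2 - (t - a) ^ 2) =
      sphericalCapVolume s (s - a + c) + sphericalCapVolume r (r - c) := by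
  -- `c` is the abscissa of the plane in which the two spheres meet
  have hplane : ∀ t, (r ^ 2 - t ^ 2) - (s ^ 2 - (t - a) ^ 2) = 2 * a * (c - t) := fun t => by
    rw [hc]; field_simp; ring
  have hfc : Continuous fun t => π * min (r ^ 2 - t ^ 2) (s ^ 2 - (t - a) ^ 2) := by fun_prop
  have piece₁ : ∫ t in (a - s)..c, π * min (r ^ 2 - t ^ 2) (s ^ 2 - (t - a) ^ 2) =
      sphericalCapVolume s (s - a + c) := by
    rw [intervalIntegral.integral_congr (g := fun t => π * (s ^ 2 - (a - t) ^ 2)),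
      intervalIntegral.integral_comp_sub_left (fun u => π * (s ^ 2 - u ^ 2)),
      ← integral_pi_mul_sq_sub_sq]
    · congr 1 <;> ring
    · intro t ht
      rw [uIcc_of_le hc₀] at ht
      dsimp only
      rw [min_eq_right (by nlinarith [hplane t, mul_le_mul_of_nonneg_left ht.2 ha.le]),
        sub_sq_comm]
  have piece₂ : ∫ t in c..r, π * min (r ^ 2 - t ^ 2) (s ^ 2 - (t - a) ^ 2) =
      sphericalCapVolume r (r - c) := by
    rw [intervalIntegral.integral_congr (g := fun t => π * (r ^ 2 - t ^ 2)), ← sub_sub_cancel r c,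
      integral_pi_mul_sq_sub_sq, sub_sub_cancel]
    intro t ht
    rw [uIcc_of_le hc₁] at ht
    dsimp only
    rw [min_eq_left (by nlinarith [hplane t, mul_le_mul_of_nonneg_left ht.1 ha.le])]
  rw [← intervalIntegral.integral_add_adjacent_intervals (hfc.intervalIntegrable _ c)
    (hfc.intervalIntegrable c _), piece₁, piece₂]

lemma volume_closedBall_zero_inter_closedBall_smul_single {a r s c : ℝ} (ha : 0 < a)
    (hs₀ : |a - r| ≤ s) (hs₁ : s ≤ a + r) (hc : c = (r ^ 2 + a ^ 2 - s ^ 2) / (2 * a)) :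
    volume (closedBall (0 : EuclideanSpace ℝ (Fin 3)) r ∩
        closedBall (a • EuclideanSpace.single 0 1) s) =
      ENNReal.ofReal (sphericalCapVolume s (s - a + c) + sphericalCapVolume r (r - c)) := by
  obtain ⟨har, hra⟩ := abs_le.1 hs₀
  have hr : 0 ≤ r := by linarith
  have hs : 0 ≤ s := by linarith
  have hc₀ : a - s ≤ c := by
    rw [hc, le_div_iff₀ (by positivity)]; nlinarith
  have hc₁ : c ≤ r := by
    rw [hc, div_le_iff₀ (by positivity)]; nlinarith
  have hfc : Continuous fun t => π * min (r ^ 2 - t ^ 2) (s ^ 2 - (t - a) ^ 2) := by fun_prop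
  rw [closedBall_zero_inter_closedBall_smul_single hr hs,
    volume_solid_of_revolution (ρ := fun t => min (r ^ 2 - t ^ 2) (s ^ 2 - (t - a) ^ 2))
      (by fun_prop),
    lintegral_ofReal_eq_ofReal_intervalIntegral (hc₀.trans hc₁) hfc.integrableOn_Icc ?_ ?_,
    integral_pi_mul_min_sq_sub_sq ha hc₀ hc₁ hc]
  · rintro t ⟨ht₀, ht₁⟩
    exact mul_nonneg pi_pos.le (le_min (by nlinarith) (by nlinarith))
  · intro t ht
    rw [mem_Icc, not_and_or, not_le, not_le] at ht
    rcases ht with ht | ht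
    · exact mul_nonpos_of_nonneg_of_nonpos pi_pos.le ((min_le_right _ _).trans (by nlinarith))
    · exact mul_nonpos_of_nonneg_of_nonpos pi_pos.le ((min_le_left _ _).trans (by nlinarith))

lemma volume_closedBall_inter_closedBall_fin_three {x y : EuclideanSpace ℝ (Fin 3)} {r s c : ℝ}
    (hxy : 0 < dist x y) (hs₀ : |dist x y - r| ≤ s) (hs₁ : s ≤ dist x y + r)
    (hc : c = (r ^ 2 + dist x y ^ 2 - s ^ 2) / (2 * dist x y)) :
    volume (closedBall x r ∩ closedBall y s) =
      ENNReal.ofReal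
        (sphericalCapVolume s (s - dist x y + c) + sphericalCapVolume r (r - c)) := by
  rw [volume_closedBall_inter_closedBall_eq_smul
    (by simp : ‖EuclideanSpace.single (0 : Fin 3) (1 : ℝ)‖ = 1)]
  exact volume_closedBall_zero_inter_closedBall_smul_single hxy hs₀ hs₁ hc

theorem cdf_dist_uniform_ball_exterior_general
    {Ω : Type*} [MeasurableSpace Ω] (μ : Measure Ω)
    (R₀ R₁ : ℝ) (hR₀ : 0 < R₀) (S₀ P : EuclideanSpace ℝ (Fin 3))
    (hR₁ : dist P S₀ = R₁) (hR₁ge : R₀ ≤ R₁)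
    (X : Ω → EuclideanSpace ℝ (Fin 3)) (hX : Measurable X)
    (hunif : Measure.map X μ =
      (volume (Metric.closedBall S₀ R₀))⁻¹ • volume.restrict (Metric.closedBall S₀ R₀))
    (d : ℝ) (hd0 : R₁ - R₀ ≤ d) (hd : d ≤ R₁ + R₀)
    (h₁ h₂ : ℝ)
    (hh₁ : h₁ = d - R₁ + (R₀ ^ 2 + R₁ ^ 2 - d ^ 2) / (2 * R₁))
    (hh₂ : h₂ = R₀ - (R₀ ^ 2 + R₁ ^ 2 - d ^ 2) / (2 * R₁)) :
    μ {ω | dist P (X ω) ≤ d} =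
      ENNReal.ofReal ((h₁ ^ 2 * (3 * d - h₁) + h₂ ^ 2 * (3 * R₀ - h₂)) / (4 * R₀ ^ 3)) := by
  rw [dist_comm] at hR₁
  have hevent : {ω | dist P (X ω) ≤ d} = X ⁻¹' closedBall P d := by
    ext ω; simp [dist_comm]
  have hlens : volume (closedBall S₀ R₀ ∩ closedBall P d) =
      ENNReal.ofReal (sphericalCapVolume d h₁ + sphericalCapVolume R₀ h₂) := by
    rw [volume_closedBall_inter_closedBall_fin_three (hR₁ ▸ hR₀.trans_le hR₁ge)
      (by rw [hR₁, abs_le]; constructor <;> linarith) (by linarith) rfl, hR₁, ← hh₁, ← hh₂]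
  rw [hevent, ← Measure.map_apply hX measurableSet_closedBall, hunif, Measure.smul_apply,
    Measure.restrict_apply measurableSet_closedBall, smul_eq_mul, inter_comm, hlens,
    EuclideanSpace.volume_closedBall_fin_three, ← ENNReal.ofReal_pow hR₀.le,
    ← ENNReal.ofReal_mul (by positivity), ← ENNReal.div_eq_inv_mul,
    ← ENNReal.ofReal_div_of_pos (by positivity)]
  congr 1
  unfold sphericalCapVolume
  field_simp

/-- For `X` uniform on `B(S₀, R₀) ⊂ ℝ³`, `P` at distance `R₁ ≥ R₀` from `S₀`, and
`D = ‖P - X‖₂`: for `R₁ - R₀ ≤ d ≤ R₁ + R₀`,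
`P(D ≤ d) = [h₁(d)²(3d - h₁(d)) + h₂(d)²(3R₀ - h₂(d))]/(4R₀³)`, with
`h₁(d) = d - R₁ + (R₀² + R₁² - d²)/(2R₁)` and `h₂(d) = R₀ - (R₀² + R₁² - d²)/(2R₁)`. -/
theorem cdf_dist_uniform_ball_exterior
    {Ω : Type*} [MeasurableSpace Ω] (μ : Measure Ω) [IsProbabilityMeasure μ]
    (R₀ R₁ : ℝ) (hR₀ : 0 < R₀) (S₀ P : EuclideanSpace ℝ (Fin 3))
    (hR₁ : dist P S₀ = R₁) (hR₁ge : R₀ ≤ R₁)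
    (X : Ω → EuclideanSpace ℝ (Fin 3)) (hX : Measurable X)
    (hunif : Measure.map X μ =
      (volume (Metric.closedBall S₀ R₀))⁻¹ • volume.restrict (Metric.closedBall S₀ R₀))
    (d : ℝ) (hd0 : R₁ - R₀ ≤ d) (hd : d ≤ R₁ + R₀)
    (h₁ h₂ : ℝ)
    (hh₁ : h₁ = d - R₁ + (R₀ ^ 2 + R₁ ^ 2 - d ^ 2) / (2 * R₁))
    (hh₂ : h₂ = R₀ - (R₀ ^ 2 + R₁ ^ 2 - d ^ 2) / (2 * R₁)) :
    μ {ω | dist P (X ω) ≤ d} =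
      ENNReal.ofReal ((h₁ ^ 2 * (3 * d - h₁) + h₂ ^ 2 * (3 * R₀ - h₂)) / (4 * R₀ ^ 3)) :=
  cdf_dist_uniform_ball_exterior_general μ R₀ R₁ hR₀ S₀ P hR₁ hR₁ge X hX hunif d hd0 hd h₁ h₂ hh₁
    hh₂
end

section
/- For R₁ ≥ R₀ > 0 and R₁ - R₀ ≤ d ≤ R₁ + R₀, the Lebesgue measure of the intersection B(0, R₀) ∩ B((R₁,0,0), d) of two closed balls in ℝ³ equals V(d, h₁(d)) + V(R₀, h₂(d)), where V(R,h) = πh²(3R-h)/3, h₁(d) = d - R₁ + (R₀² + R₁² - d²)/(2R₁), and h₂(d) = R₀ - (R₀² + R₁² - d²)/(2R₁). -/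
/-!
The plane `x = a`, `a = (R₀² + R₁² - d²) / (2 R₁)`, contains the circle where the two spheres
meet. It cuts the intersection of the balls into the cap `x ≥ a` of the first ball and the cap
`x ≤ a` of the second, which overlap only inside the plane, a null set. By Cavalieri's principle
a cap of a ball of radius `R` about `(c, 0, 0)` has volume `∫ π (R² - (t - c)²) dt` over its range
of abscissae `t`, and this integral is `V(R, h)`.
-/

open Real MeasureTheory Set

noncomputable def capVolume (R h : ℝ) : ℝ := π * h ^ 2 * (3 * R - h) / 3

lemma capVolume_nonneg {R h : ℝ} (hhR : h ≤ 3 * R) : 0 ≤ capVolume R h := by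
  have : 0 ≤ 3 * R - h := by linarith
  unfold capVolume
  positivity

lemma volume_disk (s : ℝ) :
    volume {p : Fin 2 → ℝ | p 0 ^ 2 + p 1 ^ 2 ≤ s} = ENNReal.ofReal (π * s) := by
  rcases lt_or_ge s 0 with hs | hs
  · have hempty : {p : Fin 2 → ℝ | p 0 ^ 2 + p 1 ^ 2 ≤ s} = ∅ :=
      eq_empty_of_forall_notMem fun p hp ↦ by
        nlinarith [sq_nonneg (p 0), sq_nonneg (p 1), hp.out]
    rw [hempty, measure_empty, ENNReal.ofReal_of_nonpos (by nlinarith [pi_pos])]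
  · have hball : {p : Fin 2 → ℝ | p 0 ^ 2 + p 1 ^ 2 ≤ s} =
        WithLp.toLp 2 ⁻¹' Metric.closedBall (0 : EuclideanSpace ℝ (Fin 2)) √s := by
      rw [EuclideanSpace.closedBall_zero_eq _ (sqrt_nonneg s), sq_sqrt hs]
      simp [Fin.sum_univ_two]
    rw [hball, (PiLp.volume_preserving_toLp (Fin 2)).measure_preimage
        measurableSet_closedBall.nullMeasurableSet, EuclideanSpace.volume_closedBall_fin_two,
      ← ENNReal.ofReal_pow (sqrt_nonneg s), sq_sqrt hs, ← ENNReal.ofReal_mul hs, mul_comm]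

def axisBall (c R : ℝ) : Set (Fin 3 → ℝ) := {y | (y 0 - c) ^ 2 + y 1 ^ 2 + y 2 ^ 2 ≤ R ^ 2}

lemma measurableSet_axisBall (c R : ℝ) : MeasurableSet (axisBall c R) :=
  measurableSet_le (by fun_prop) (by fun_prop)

lemma preimage_toLp_closedBall (c R : ℝ) (hR : 0 ≤ R) :
    WithLp.toLp 2 ⁻¹' Metric.closedBall (WithLp.toLp 2 ![c, 0, 0] : EuclideanSpace ℝ (Fin 3)) R =
      axisBall c R := by
  ext y
  simp [axisBall, EuclideanSpace.dist_eq, Fin.sum_univ_three, sqrt_le_left hR, Real.dist_eq,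
    sq_abs]

lemma volume_axisBall_inter_slab (c R : ℝ) {s : Set ℝ} (hs : MeasurableSet s) :
    volume (axisBall c R ∩ {y | y 0 ∈ s}) =
      ∫⁻ t in s, ENNReal.ofReal (π * (R ^ 2 - (t - c) ^ 2)) := by
  let T : Set (ℝ × (Fin 2 → ℝ)) :=
    {q | (q.1 - c) ^ 2 + q.2 0 ^ 2 + q.2 1 ^ 2 ≤ R ^ 2} ∩ Prod.fst ⁻¹' s
  have hT : MeasurableSet T :=
    (measurableSet_le (by fun_prop) (by fun_prop)).inter (measurable_fst hs)
  have hslice (t : ℝ) : volume (Prod.mk t ⁻¹' T) =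
      s.indicator (fun t ↦ ENNReal.ofReal (π * (R ^ 2 - (t - c) ^ 2))) t := by
    by_cases ht : t ∈ s
    · rw [indicator_of_mem ht, ← volume_disk]
      congr 1
      ext p
      simp only [T, mem_preimage, mem_inter_iff, mem_ofPred_eq, ht, and_true]
      constructor <;> intro h <;> linarith
    · have hempty : Prod.mk t ⁻¹' T = ∅ := by
        ext p
        simp [T, ht]
      rw [indicator_of_notMem ht, hempty, measure_empty]
  have hpre : MeasurableEquiv.piFinSuccAbove (fun _ : Fin 3 ↦ ℝ) 0 ⁻¹' T =
      axisBall c R ∩ {y | y 0 ∈ s} := rfl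
  rw [← lintegral_indicator hs, ← hpre,
    (volume_preserving_piFinSuccAbove (fun _ : Fin 3 ↦ ℝ) 0).measure_preimage hT.nullMeasurableSet,
    Measure.volume_eq_prod, Measure.prod_apply hT]
  simp_rw [hslice]

lemma lintegral_disk_area_Icc {c R l u : ℝ} (hlu : l ≤ u) (hl : c - R ≤ l) (hu : u ≤ c + R) :
    ∫⁻ t in Icc l u, ENNReal.ofReal (π * (R ^ 2 - (t - c) ^ 2)) =
      ENNReal.ofReal (π * (R ^ 2 * (u - l) - ((u - c) ^ 3 - (l - c) ^ 3) / 3)) := by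
  have hderiv (t : ℝ) : HasDerivAt (fun t ↦ π * (R ^ 2 * t - (t - c) ^ 3 / 3))
      (π * (R ^ 2 - (t - c) ^ 2)) t := by
    have hcube : HasDerivAt (fun t : ℝ ↦ (t - c) ^ 3) (3 * (t - c) ^ 2) t := by
      simpa using ((hasDerivAt_id t).sub_const c).fun_pow 3
    exact ((((hasDerivAt_id t).const_mul (R ^ 2)).sub (hcube.div_const 3)).const_mul π).congr_deriv
      (by ring)
  have hcont : Continuous fun t : ℝ ↦ π * (R ^ 2 - (t - c) ^ 2) := by fun_prop
  have hnonneg : ∀ᵐ t ∂volume.restrict (Ioc l u), 0 ≤ π * (R ^ 2 - (t - c) ^ 2) := by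
    filter_upwards [ae_restrict_mem measurableSet_Ioc] with t ⟨htl, htu⟩
    have : (t - c) ^ 2 ≤ R ^ 2 := by nlinarith
    nlinarith [pi_pos]
  rw [Measure.restrict_congr_set Ioc_ae_eq_Icc.symm,
    ← ofReal_integral_eq_lintegral_ofReal hcont.integrableOn_Ioc hnonneg,
    ← intervalIntegral.integral_of_le hlu,
    intervalIntegral.integral_eq_sub_of_hasDerivAt (fun t _ ↦ hderiv t)
      (hcont.intervalIntegrable l u)]
  ring_nf

lemma volume_axisBall_inter_upper {c R a : ℝ} (hl : c - R ≤ a) (hu : a ≤ c + R) :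
    volume (axisBall c R ∩ {y | a ≤ y 0}) = ENNReal.ofReal (capVolume R (c + R - a)) := by
  have hR : 0 ≤ R := by linarith
  have hslab : axisBall c R ∩ {y | a ≤ y 0} = axisBall c R ∩ {y | y 0 ∈ Icc a (c + R)} := by
    ext y
    simp only [axisBall, mem_inter_iff, mem_ofPred_eq, mem_Icc]
    constructor
    · rintro ⟨hy, hay⟩
      exact ⟨hy, hay, by nlinarith [sq_nonneg (y 1), sq_nonneg (y 2)]⟩
    · rintro ⟨hy, hay, -⟩
      exact ⟨hy, hay⟩
  rw [hslab, volume_axisBall_inter_slab c R measurableSet_Icc,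
    lintegral_disk_area_Icc hu hl le_rfl, capVolume]
  ring_nf

lemma volume_axisBall_inter_lower {c R a : ℝ} (hl : c - R ≤ a) (hu : a ≤ c + R) :
    volume (axisBall c R ∩ {y | y 0 ≤ a}) = ENNReal.ofReal (capVolume R (a - (c - R))) := by
  have hR : 0 ≤ R := by linarith
  have hslab : axisBall c R ∩ {y | y 0 ≤ a} = axisBall c R ∩ {y | y 0 ∈ Icc (c - R) a} := by
    ext y
    simp only [axisBall, mem_inter_iff, mem_ofPred_eq, mem_Icc]
    constructor
    · rintro ⟨hy, hya⟩
      exact ⟨hy, by nlinarith [sq_nonneg (y 1), sq_nonneg (y 2)], hya⟩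
    · rintro ⟨hy, -, hya⟩
      exact ⟨hy, hya⟩
  rw [hslab, volume_axisBall_inter_slab c R measurableSet_Icc,
    lintegral_disk_area_Icc hl le_rfl hu, capVolume]
  ring_nf

/-- `x = a` is the radical plane of the two spheres. -/
lemma axisBall_inter_axisBall {c₀ c₁ r₀ r₁ a : ℝ} (hc : c₀ ≤ c₁)
    (ha : 2 * (c₁ - c₀) * a = r₀ ^ 2 - r₁ ^ 2 + c₁ ^ 2 - c₀ ^ 2) :
    axisBall c₀ r₀ ∩ axisBall c₁ r₁ =
      (axisBall c₀ r₀ ∩ {y | a ≤ y 0}) ∪ (axisBall c₁ r₁ ∩ {y | y 0 ≤ a}) := by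
  ext y
  simp only [axisBall, mem_inter_iff, mem_union, mem_ofPred_eq]
  constructor
  · rintro ⟨h₀, h₁⟩
    exact (le_total a (y 0)).imp (fun hay ↦ ⟨h₀, hay⟩) (fun hya ↦ ⟨h₁, hya⟩)
  · rintro (⟨h₀, hay⟩ | ⟨h₁, hya⟩)
    · exact ⟨h₀, by nlinarith [mul_nonneg (sub_nonneg.2 hc) (sub_nonneg.2 hay)]⟩
    · exact ⟨by nlinarith [mul_nonneg (sub_nonneg.2 hc) (sub_nonneg.2 hya)], h₁⟩

lemma volume_axisBall_inter_axisBall {c₀ c₁ r₀ r₁ a : ℝ} (hc : c₀ ≤ c₁)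
    (ha : 2 * (c₁ - c₀) * a = r₀ ^ 2 - r₁ ^ 2 + c₁ ^ 2 - c₀ ^ 2) :
    volume (axisBall c₀ r₀ ∩ axisBall c₁ r₁) =
      volume (axisBall c₀ r₀ ∩ {y | a ≤ y 0}) + volume (axisBall c₁ r₁ ∩ {y | y 0 ≤ a}) := by
  have hplane : volume {y : Fin 3 → ℝ | y 0 = a} = 0 := by
    rw [volume_pi]
    exact Measure.pi_hyperplane (fun _ : Fin 3 ↦ (volume : Measure ℝ)) 0 a
  have hdisj : AEDisjoint volume (axisBall c₀ r₀ ∩ {y | a ≤ y 0})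
      (axisBall c₁ r₁ ∩ {y | y 0 ≤ a}) :=
    measure_mono_null (fun y ⟨⟨_, hay⟩, ⟨_, hya⟩⟩ ↦ le_antisymm hya hay) hplane
  rw [axisBall_inter_axisBall hc ha, measure_union₀ _ hdisj]
  exact ((measurableSet_axisBall c₁ r₁).inter
    (measurableSet_le (by fun_prop) measurable_const)).nullMeasurableSet

/-- For `R₁ ≥ R₀ > 0` and `R₁ - R₀ ≤ d ≤ R₁ + R₀`, the volume of the intersection of
the closed balls `B(0, R₀)` and `B((R₁,0,0), d)` in `ℝ³` is `V(d, h₁(d)) + V(R₀, h₂(d))`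
where `V(R, h) = π h² (3R - h)/3`. -/
theorem volume_inter_balls (R₀ R₁ d : ℝ) (hR₀ : 0 < R₀) (hR₁ : R₀ ≤ R₁)
    (hd0 : R₁ - R₀ ≤ d) (hd : d ≤ R₁ + R₀)
    (h₁ h₂ : ℝ)
    (hh₁ : h₁ = d - R₁ + (R₀ ^ 2 + R₁ ^ 2 - d ^ 2) / (2 * R₁))
    (hh₂ : h₂ = R₀ - (R₀ ^ 2 + R₁ ^ 2 - d ^ 2) / (2 * R₁)) :
    volume (Metric.closedBall (0 : EuclideanSpace ℝ (Fin 3)) R₀ ∩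
        Metric.closedBall ((WithLp.equiv 2 (Fin 3 → ℝ)).symm ![R₁, 0, 0]) d) =
      ENNReal.ofReal (π * h₁ ^ 2 * (3 * d - h₁) / 3 + π * h₂ ^ 2 * (3 * R₀ - h₂) / 3) := by
  have hR₁pos : 0 < R₁ := hR₀.trans_le hR₁
  set a := (R₀ ^ 2 + R₁ ^ 2 - d ^ 2) / (2 * R₁)
  have ha : 2 * (R₁ - 0) * a = R₀ ^ 2 - d ^ 2 + R₁ ^ 2 - 0 ^ 2 := by
    simp only [a]
    field_simp
    ring
  have haR₀ : a ≤ R₀ := by nlinarith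
  have hda : R₁ - d ≤ a := by nlinarith
  have hcap₁ : a - (R₁ - d) = h₁ := by rw [hh₁]; ring
  have hcap₂ : 0 + R₀ - a = h₂ := by rw [hh₂]; ring
  have hzero : (0 : EuclideanSpace ℝ (Fin 3)) = WithLp.toLp 2 ![0, 0, 0] := by
    ext i; fin_cases i <;> rfl
  rw [WithLp.equiv_symm_apply, hzero,
    ← (PiLp.volume_preserving_toLp (Fin 3)).measure_preimage
      (measurableSet_closedBall.inter measurableSet_closedBall).nullMeasurableSet,
    preimage_inter, preimage_toLp_closedBall 0 R₀ hR₀.le,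
    preimage_toLp_closedBall R₁ d (by linarith), volume_axisBall_inter_axisBall hR₁pos.le ha,
    volume_axisBall_inter_upper (by linarith) (by linarith),
    volume_axisBall_inter_lower (by linarith) (by linarith), hcap₁, hcap₂,
    ← ENNReal.ofReal_add (capVolume_nonneg (by linarith)) (capVolume_nonneg (by linarith)),
    add_comm]
  rfl
end

section
/- For R₁ ≥ R₀ > 0 and R₁ - R₀ ≤ d ≤ R₁ + R₀, the area (2-dimensional Lebesgue measure) of the intersection of the closed disks D(0, R₀) and D((R₁,0), d) in ℝ² equals A(d, h₁(d)) + A(R₀, h₂(d)), where A(R,h) = R²·arccos((R-h)/R) - (R-h)√(R² - (R-h)²), h₁(d) = d - R₁ + (R₀² + R₁² - d²)/(2R₁), and h₂(d) = R₀ - (R₀² + R₁² - d²)/(2R₁). -/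
/-!
By Fubini, the area of the lens is `∫ 2 √(min (R₀² - x²) (d² - (x - R₁)²)) dx` over
`[R₁ - d, R₀]`. The two circles meet on the line `x = a` with `2 R₁ a = R₀² + R₁² - d²`; left of
it the second circle bounds the lens, right of it the first, so the integral splits into two
circular-segment integrals, each computed with the antiderivative `x √(R² - x²) + R² arcsin (x / R)`
of `2 √(R² - x²)`.
-/

open Real MeasureTheory intervalIntegral Set

/-- The paper's `A(R, h)`: the area of a segment of height `h` in a disk of radius `R`. -/
noncomputable def circularSegmentArea (R h : ℝ) : ℝ :=
  R ^ 2 * arccos ((R - h) / R) - (R - h) * √(R ^ 2 - (R - h) ^ 2)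

lemma hasDerivAt_mul_sqrt_add_arcsin {R x : ℝ} (hx : x ∈ Ioo (-R) R) :
    HasDerivAt (fun x ↦ x * √(R ^ 2 - x ^ 2) + R ^ 2 * arcsin (x / R))
      (2 * √(R ^ 2 - x ^ 2)) x := by
  obtain ⟨hx₁, hx₂⟩ := hx
  have hR : 0 < R := by linarith
  have hpos : 0 < R ^ 2 - x ^ 2 := by nlinarith
  have hsqrt : HasDerivAt (fun x ↦ √(R ^ 2 - x ^ 2)) (-(2 * x) / (2 * √(R ^ 2 - x ^ 2))) x :=
    (((hasDerivAt_pow 2 x).const_sub (R ^ 2)).sqrt hpos.ne').congr_deriv (by ring)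
  have harcsin : HasDerivAt (fun x ↦ arcsin (x / R)) (1 / √(1 - (x / R) ^ 2) * (1 / R)) x :=
    (hasDerivAt_arcsin (by rw [ne_eq, div_eq_iff hR.ne']; linarith)
      (by rw [ne_eq, div_eq_iff hR.ne']; linarith)).comp x ((hasDerivAt_id' x).div_const R)
  refine (((hasDerivAt_id' x).mul hsqrt).add (harcsin.const_mul (R ^ 2))).congr_deriv ?_
  have hsqrt_div : √(1 - (x / R) ^ 2) = √(R ^ 2 - x ^ 2) / R := by
    rw [show 1 - (x / R) ^ 2 = (R ^ 2 - x ^ 2) / R ^ 2 by field_simp, sqrt_div hpos.le,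
      sqrt_sq hR.le]
  have hsq := mul_self_sqrt hpos.le
  rw [hsqrt_div]
  field_simp
  linear_combination -hsq

lemma integral_two_mul_sqrt_sq_sub_sq {R t : ℝ} (ht : t ∈ Icc (-R) R) :
    ∫ x in t..R, 2 * √(R ^ 2 - x ^ 2) = circularSegmentArea R (R - t) := by
  obtain ⟨ht₁, ht₂⟩ := ht
  rw [circularSegmentArea, sub_sub_cancel]
  rcases (show 0 ≤ R by linarith).eq_or_lt with rfl | hR
  · obtain rfl : t = 0 := by linarith
    simp
  rw [integral_eq_sub_of_hasDeriv_right_of_le ht₂ (by fun_prop)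
    (fun x hx ↦ (hasDerivAt_mul_sqrt_add_arcsin ⟨ht₁.trans_lt hx.1, hx.2⟩).hasDerivWithinAt)
    (Continuous.intervalIntegrable (by fun_prop) _ _)]
  simp only [div_self hR.ne', arcsin_one, arccos_eq_pi_div_two_sub_arcsin, sub_self, sqrt_zero]
  ring

lemma volume_setOf_sq_le (m : ℝ) : volume {y : ℝ | y ^ 2 ≤ m} = ENNReal.ofReal (2 * √m) := by
  rcases le_or_gt 0 m with hm | hm
  · have : {y : ℝ | y ^ 2 ≤ m} = Icc (-√m) √m := by
      ext y
      rw [mem_ofPred_eq, mem_Icc, ← abs_le, le_sqrt (abs_nonneg y) hm, sq_abs]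
    rw [this, Real.volume_Icc, sub_neg_eq_add, ← two_mul]
  · have : {y : ℝ | y ^ 2 ≤ m} = ∅ := eq_empty_of_forall_notMem fun y hy ↦
      (hm.trans_le (sq_nonneg y)).not_ge hy
    simp [this, sqrt_eq_zero_of_nonpos hm.le]

lemma volume_setOf_snd_sq_le {f : ℝ → ℝ} (hf : Measurable f) :
    volume {q : ℝ × ℝ | q.2 ^ 2 ≤ f q.1} = ∫⁻ x, ENNReal.ofReal (2 * √(f x)) := by
  have hmeas : MeasurableSet {q : ℝ × ℝ | q.2 ^ 2 ≤ f q.1} :=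
    measurableSet_le (by fun_prop) (by fun_prop)
  rw [Measure.volume_eq_prod, Measure.prod_apply hmeas]
  exact lintegral_congr fun x ↦ volume_setOf_sq_le (f x)

lemma lintegral_ofReal_eq_intervalIntegral {g : ℝ → ℝ} {a b : ℝ} (hab : a ≤ b)
    (hg : ContinuousOn g (Icc a b)) (hg_nonneg : ∀ x ∈ Icc a b, 0 ≤ g x)
    (hg_supp : ∀ x ∉ Icc a b, g x = 0) :
    ∫⁻ x, ENNReal.ofReal (g x) = ENNReal.ofReal (∫ x in a..b, g x) := by
  have hsupp : (fun x ↦ ENNReal.ofReal (g x)).support ⊆ Icc a b := fun x hx ↦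
    by_contra fun hxs ↦ hx (by simp [hg_supp x hxs])
  rw [← setLIntegral_eq_of_support_subset hsupp, ← ofReal_integral_eq_lintegral_ofReal
    hg.integrableOn_Icc ((ae_restrict_iff' measurableSet_Icc).2 (ae_of_all _ hg_nonneg)),
    integral_Icc_eq_integral_Ioc, integral_of_le hab]

lemma integral_two_mul_sqrt_min_eq_add_circularSegmentArea {R₀ R₁ d a : ℝ} (hR₁ : 0 ≤ R₁)
    (ha : 2 * R₁ * a = R₀ ^ 2 + R₁ ^ 2 - d ^ 2) (ha₀ : a ∈ Icc (-R₀) R₀)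
    (ha₁ : R₁ - a ∈ Icc (-d) d) :
    ∫ x in (R₁ - d)..R₀, 2 * √(min (R₀ ^ 2 - x ^ 2) (d ^ 2 - (x - R₁) ^ 2)) =
      circularSegmentArea d (d - (R₁ - a)) + circularSegmentArea R₀ (R₀ - a) := by
  have hdiff (x : ℝ) : (R₀ ^ 2 - x ^ 2) - (d ^ 2 - (x - R₁) ^ 2) = 2 * R₁ * (a - x) := by
    linear_combination -ha
  have hcont : Continuous fun x ↦ 2 * √(min (R₀ ^ 2 - x ^ 2) (d ^ 2 - (x - R₁) ^ 2)) := by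
    fun_prop
  have hleft : ∫ x in (R₁ - d)..a, 2 * √(min (R₀ ^ 2 - x ^ 2) (d ^ 2 - (x - R₁) ^ 2)) =
      ∫ x in (R₁ - a)..d, 2 * √(d ^ 2 - x ^ 2) := by
    calc _ = ∫ x in (R₁ - d)..a, 2 * √(d ^ 2 - (R₁ - x) ^ 2) := by
          refine integral_congr fun x hx ↦ ?_
          rw [uIcc_of_le (by linarith [ha₁.2])] at hx
          have : d ^ 2 - (x - R₁) ^ 2 ≤ R₀ ^ 2 - x ^ 2 := by nlinarith [hdiff x, hx.2]
          simp only [min_eq_right this]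
          ring_nf
      _ = _ := by rw [integral_comp_sub_left (fun x ↦ 2 * √(d ^ 2 - x ^ 2)), sub_sub_cancel]
  have hright : ∫ x in a..R₀, 2 * √(min (R₀ ^ 2 - x ^ 2) (d ^ 2 - (x - R₁) ^ 2)) =
      ∫ x in a..R₀, 2 * √(R₀ ^ 2 - x ^ 2) := by
    refine integral_congr fun x hx ↦ ?_
    rw [uIcc_of_le ha₀.2] at hx
    have : R₀ ^ 2 - x ^ 2 ≤ d ^ 2 - (x - R₁) ^ 2 := by nlinarith [hdiff x, hx.1]
    simp only [min_eq_left this]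
  rw [← integral_add_adjacent_intervals (hcont.intervalIntegrable _ a)
    (hcont.intervalIntegrable a _), hleft, hright, integral_two_mul_sqrt_sq_sub_sq ha₁,
    integral_two_mul_sqrt_sq_sub_sq ha₀]

lemma EuclideanSpace.mem_closedBall_fin_two_iff {p c : EuclideanSpace ℝ (Fin 2)} {r : ℝ}
    (hr : 0 ≤ r) : p ∈ Metric.closedBall c r ↔ (p 0 - c 0) ^ 2 + (p 1 - c 1) ^ 2 ≤ r ^ 2 := by
  rw [Metric.mem_closedBall, EuclideanSpace.dist_eq, Fin.sum_univ_two, sqrt_le_left hr,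
    Real.dist_eq, Real.dist_eq, sq_abs, sq_abs]

lemma EuclideanSpace.measurePreserving_fin_two_toProd :
    MeasurePreserving (fun p : EuclideanSpace ℝ (Fin 2) ↦ (p 0, p 1)) :=
  (volume_preserving_finTwoArrow ℝ).comp
    (EuclideanSpace.volume_preserving_symm_measurableEquiv_toLp (Fin 2))

lemma volume_closedBall_inter_closedBall_eq_lintegral {R₀ R₁ d : ℝ} (hR₀ : 0 ≤ R₀)
    (hd : 0 ≤ d) :
    volume (Metric.closedBall (0 : EuclideanSpace ℝ (Fin 2)) R₀ ∩
        Metric.closedBall ((WithLp.equiv 2 (Fin 2 → ℝ)).symm ![R₁, 0]) d) =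
      ∫⁻ x, ENNReal.ofReal (2 * √(min (R₀ ^ 2 - x ^ 2) (d ^ 2 - (x - R₁) ^ 2))) := by
  have hlens : Metric.closedBall (0 : EuclideanSpace ℝ (Fin 2)) R₀ ∩
        Metric.closedBall ((WithLp.equiv 2 (Fin 2 → ℝ)).symm ![R₁, 0]) d =
      (fun p : EuclideanSpace ℝ (Fin 2) ↦ (p 0, p 1)) ⁻¹'
        {q | q.2 ^ 2 ≤ min (R₀ ^ 2 - q.1 ^ 2) (d ^ 2 - (q.1 - R₁) ^ 2)} := by
    ext p
    simp only [mem_inter_iff, EuclideanSpace.mem_closedBall_fin_two_iff hR₀,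
      EuclideanSpace.mem_closedBall_fin_two_iff hd, mem_preimage, mem_ofPred_eq, le_min_iff,
      PiLp.zero_apply, sub_zero, WithLp.equiv_symm_apply, Matrix.cons_val_zero,
      Matrix.cons_val_one, Matrix.cons_val_fin_one]
    constructor <;> rintro ⟨h₀, h₁⟩ <;> constructor <;> linarith
  rw [hlens, EuclideanSpace.measurePreserving_fin_two_toProd.measure_preimage
    (measurableSet_le (by fun_prop) (by fun_prop)).nullMeasurableSet]
  exact volume_setOf_snd_sq_le (f := fun x ↦ min (R₀ ^ 2 - x ^ 2) (d ^ 2 - (x - R₁) ^ 2))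
    (by fun_prop)

/-- For `R₁ ≥ R₀ > 0` and `R₁ - R₀ ≤ d ≤ R₁ + R₀`, the area of the intersection of the
closed disks `D(0, R₀)` and `D((R₁,0), d)` in `ℝ²` equals `A(d, h₁(d)) + A(R₀, h₂(d))`
where `A(R, h) = R² arccos((R-h)/R) - (R-h)√(R² - (R-h)²)`. -/
theorem area_inter_disks (R₀ R₁ d : ℝ) (hR₀ : 0 < R₀) (hR₁ : R₀ ≤ R₁)
    (hd0 : R₁ - R₀ ≤ d) (hd : d ≤ R₁ + R₀)
    (h₁ h₂ : ℝ)
    (hh₁ : h₁ = d - R₁ + (R₀ ^ 2 + R₁ ^ 2 - d ^ 2) / (2 * R₁))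
    (hh₂ : h₂ = R₀ - (R₀ ^ 2 + R₁ ^ 2 - d ^ 2) / (2 * R₁)) :
    volume (Metric.closedBall (0 : EuclideanSpace ℝ (Fin 2)) R₀ ∩
        Metric.closedBall ((WithLp.equiv 2 (Fin 2 → ℝ)).symm ![R₁, 0]) d) =
      ENNReal.ofReal
        ((d ^ 2 * Real.arccos ((d - h₁) / d) - (d - h₁) * Real.sqrt (d ^ 2 - (d - h₁) ^ 2)) +
         (R₀ ^ 2 * Real.arccos ((R₀ - h₂) / R₀) -
            (R₀ - h₂) * Real.sqrt (R₀ ^ 2 - (R₀ - h₂) ^ 2))) := by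
  have hR₁_pos : 0 < R₁ := hR₀.trans_le hR₁
  set a := (R₀ ^ 2 + R₁ ^ 2 - d ^ 2) / (2 * R₁) with ha
  have h2a : 2 * R₁ * a = R₀ ^ 2 + R₁ ^ 2 - d ^ 2 := by rw [ha]; field_simp
  -- multiplied by `2 R₁`, these say `(R₁ - R₀)² ≤ d² ≤ (R₁ + R₀)²` and `|R₁ - d| ≤ R₀ ≤ R₁ + d`
  have ha₀ : a ∈ Icc (-R₀) R₀ := ⟨by nlinarith, by nlinarith⟩
  have ha₁ : R₁ - a ∈ Icc (-d) d := ⟨by nlinarith, by nlinarith⟩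
  have hvanish (x : ℝ) (hx : x ∉ Icc (R₁ - d) R₀) :
      2 * √(min (R₀ ^ 2 - x ^ 2) (d ^ 2 - (x - R₁) ^ 2)) = 0 := by
    rw [sqrt_eq_zero_of_nonpos, mul_zero]
    rw [mem_Icc, not_and_or, not_le, not_le] at hx
    rcases hx with hx | hx
    · exact (min_le_right _ _).trans (by nlinarith)
    · exact (min_le_left _ _).trans (by nlinarith)
  rw [volume_closedBall_inter_closedBall_eq_lintegral hR₀.le (by linarith),
    lintegral_ofReal_eq_intervalIntegral (by linarith) (by fun_prop) (fun _ _ ↦ by positivity)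
      hvanish, integral_two_mul_sqrt_min_eq_add_circularSegmentArea hR₁_pos.le h2a ha₀ ha₁,
    hh₁, hh₂, show d - (R₁ - a) = d - R₁ + a by ring]
  rfl
end

section
/- Let X be uniformly distributed on a segment [A,B] ⊂ ℝ³ with A ≠ B, let P ∈ ℝ³, and suppose the projection P₀ of P onto line (AB) satisfies ⟨A - P₀, B - P₀⟩ > 0 (i.e., P₀ ∉ [A,B]). Set d_min = min(‖P-A‖₂, ‖P-B‖₂) and d_max = max(‖P-A‖₂, ‖P-B‖₂). Then for d_min ≤ d ≤ d_max, P(‖P - X‖₂ ≤ d) = (√(d² - ‖P-P₀‖₂²) - √(d_min² - ‖P-P₀‖₂²))/‖B - A‖₂. -/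
/-!
Write `P₀ = A + t • (B - A)`. By Pythagoras, the point `A + u • (B - A)` is at distance
`√(‖P - P₀‖² + (u - t)² ‖B - A‖²)` from `P`, so `‖P - X‖ ≤ d` says exactly that `U` lies in the
interval of radius `ρ = √(d² - ‖P - P₀‖²) / ‖B - A‖` around `t`. The hypothesis on `P₀` means
`t ∉ [0, 1]`; for `d` between the distances to the endpoints this interval covers the endpoint of
`[0, 1]` nearest to `t` but not the farther one, so it meets `[0, 1]` in a segment of length
`ρ - dist t [0, 1]`, and `dist t [0, 1] · ‖B - A‖ = √(d_min² - ‖P - P₀‖²)`.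
-/

open RealInnerProductSpace MeasureTheory Set Metric

section Line

variable {E : Type*} [NormedAddCommGroup E] [InnerProductSpace ℝ E]

/-- The coordinate `t` of the orthogonal projection `A + t • (B - A)` of `P` on the line `AB`. -/
noncomputable def lineCoord (A B P : E) : ℝ := ⟪B - A, P - A⟫ / ‖B - A‖ ^ 2

theorem inner_sub_lineCoord_smul_eq_zero (A B P : E) :
    ⟪P - (A + lineCoord A B P • (B - A)), B - A⟫ = 0 := by
  rcases eq_or_ne (B - A) 0 with hv | hv
  · simp [hv]
  have hL : ‖B - A‖ ≠ 0 := norm_ne_zero_iff.mpr hv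
  rw [sub_add_eq_sub_sub, inner_sub_left, real_inner_smul_left, real_inner_self_eq_norm_sq,
    lineCoord, div_mul_cancel₀ _ (pow_ne_zero 2 hL), real_inner_comm, sub_self]

theorem norm_sub_add_smul_sq (A B P : E) (u : ℝ) :
    ‖P - (A + u • (B - A))‖ ^ 2 =
      ‖P - (A + lineCoord A B P • (B - A))‖ ^ 2 + ((u - lineCoord A B P) * ‖B - A‖) ^ 2 := by
  have hsplit : P - (A + u • (B - A)) =
      P - (A + lineCoord A B P • (B - A)) + (lineCoord A B P - u) • (B - A) := by module
  rw [hsplit, norm_add_sq_real, real_inner_smul_right, inner_sub_lineCoord_smul_eq_zero,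
    norm_smul, Real.norm_eq_abs, mul_pow, sq_abs, mul_pow]
  ring

theorem sqrt_norm_sub_add_smul_sq_sub_sq (A B P : E) (u : ℝ) :
    √(‖P - (A + u • (B - A))‖ ^ 2 - ‖P - (A + lineCoord A B P • (B - A))‖ ^ 2) =
      |u - lineCoord A B P| * ‖B - A‖ := by
  rw [norm_sub_add_smul_sq, add_sub_cancel_left, Real.sqrt_sq_eq_abs, abs_mul, abs_norm]

theorem norm_sub_lineCoord_smul_le (A B P : E) (u : ℝ) :
    ‖P - (A + lineCoord A B P • (B - A))‖ ≤ ‖P - (A + u • (B - A))‖ := by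
  refine (pow_le_pow_iff_left₀ (norm_nonneg _) (norm_nonneg _) two_ne_zero).mp ?_
  rw [norm_sub_add_smul_sq A B P u]
  exact le_add_of_nonneg_right (sq_nonneg _)

theorem inner_sub_add_smul_sub_add_smul (A B : E) (t : ℝ) :
    ⟪A - (A + t • (B - A)), B - (A + t • (B - A))⟫ = -(t * (1 - t)) * ‖B - A‖ ^ 2 := by
  have hA : A - (A + t • (B - A)) = (-t) • (B - A) := by module
  have hB : B - (A + t • (B - A)) = (1 - t) • (B - A) := by module
  rw [hA, hB, real_inner_smul_left, real_inner_smul_right, real_inner_self_eq_norm_sq]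
  ring

theorem lt_zero_or_one_lt_of_inner_sub_add_smul_pos {A B : E} {t : ℝ}
    (h : 0 < ⟪A - (A + t • (B - A)), B - (A + t • (B - A))⟫) : t < 0 ∨ 1 < t := by
  rw [inner_sub_add_smul_sub_add_smul] at h
  by_contra! ht
  nlinarith [mul_nonneg (mul_nonneg ht.1 (sub_nonneg.mpr ht.2)) (sq_nonneg ‖B - A‖)]

end Line

theorem strictMonoOn_sqrt_sq_sub_sq_div {h L : ℝ} (hh : 0 ≤ h) (hL : 0 < L) :
    StrictMonoOn (fun x => √(x ^ 2 - h ^ 2) / L) (Ici h) := by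
  intro x hx y hy hxy
  have hx2 : h ^ 2 ≤ x ^ 2 := pow_le_pow_left₀ hh hx 2
  have hxy2 : x ^ 2 < y ^ 2 := pow_lt_pow_left₀ hxy (hh.trans hx) two_ne_zero
  exact div_lt_div_of_pos_right (Real.sqrt_lt_sqrt (by linarith) (by linarith)) hL

theorem volume_closedBall_inter_Icc_zero_one {t ρ : ℝ} (ht : t < 0 ∨ 1 < t)
    (hρmin : min |t| |1 - t| ≤ ρ) (hρmax : ρ ≤ max |t| |1 - t|) :
    volume (closedBall t ρ ∩ Icc 0 1) = ENNReal.ofReal (ρ - min |t| |1 - t|) := by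
  rw [Real.closedBall_eq_Icc, Icc_inter_Icc, Real.volume_Icc]
  rcases ht with ht | ht
  · rw [abs_of_neg ht, abs_of_pos (by linarith : 0 < 1 - t),
      min_eq_left (by linarith : -t ≤ 1 - t)] at hρmin ⊢
    rw [abs_of_neg ht, abs_of_pos (by linarith : 0 < 1 - t),
      max_eq_right (by linarith : -t ≤ 1 - t)] at hρmax
    rw [max_eq_right (by linarith : t - ρ ≤ 0), min_eq_left (by linarith : t + ρ ≤ 1)]
    ring_nf
  · rw [abs_of_pos (by linarith : 0 < t), abs_of_neg (by linarith : 1 - t < 0),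
      min_eq_right (by linarith : -(1 - t) ≤ t)] at hρmin ⊢
    rw [abs_of_pos (by linarith : 0 < t), abs_of_neg (by linarith : 1 - t < 0),
      max_eq_left (by linarith : -(1 - t) ≤ t)] at hρmax
    rw [max_eq_left (by linarith : 0 ≤ t - ρ), min_eq_right (by linarith : 1 ≤ t + ρ)]
    ring_nf

theorem cdf_dist_uniform_segment_proj_outside_general
    {Ω : Type*} [MeasurableSpace Ω] (μ : Measure Ω)
    (A B P : EuclideanSpace ℝ (Fin 3)) (hAB : A ≠ B)
    (P₀ : EuclideanSpace ℝ (Fin 3))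
    (hP₀ : P₀ = A + (⟪B - A, P - A⟫ / ‖B - A‖ ^ 2) • (B - A))
    (hout : 0 < ⟪A - P₀, B - P₀⟫)
    (U : Ω → ℝ) (hU : Measurable U)
    (hUnif : Measure.map U μ = volume.restrict (Set.Icc (0 : ℝ) 1))
    (X : Ω → EuclideanSpace ℝ (Fin 3)) (hX : ∀ ω, X ω = A + U ω • (B - A))
    (dmin dmax : ℝ) (hdmin : dmin = min ‖P - A‖ ‖P - B‖)
    (hdmax : dmax = max ‖P - A‖ ‖P - B‖)
    (d : ℝ) (hd1 : dmin ≤ d) (hd2 : d ≤ dmax) :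
    μ {ω | ‖P - X ω‖ ≤ d} =
      ENNReal.ofReal ((Real.sqrt (d ^ 2 - ‖P - P₀‖ ^ 2) -
        Real.sqrt (dmin ^ 2 - ‖P - P₀‖ ^ 2)) / ‖B - A‖) := by
  set t := lineCoord A B P
  have hP₀t : P₀ = A + t • (B - A) := hP₀
  have hL : 0 < ‖B - A‖ := norm_pos_iff.mpr (sub_ne_zero.mpr hAB.symm)
  have ht : t < 0 ∨ 1 < t := lt_zero_or_one_lt_of_inner_sub_add_smul_pos (hP₀t ▸ hout)
  set f := fun x => √(x ^ 2 - ‖P - P₀‖ ^ 2) / ‖B - A‖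
  have hf : StrictMonoOn f (Ici ‖P - P₀‖) := strictMonoOn_sqrt_sq_sub_sq_div (norm_nonneg _) hL
  have hmem (u : ℝ) : ‖P - (A + u • (B - A))‖ ∈ Ici ‖P - P₀‖ :=
    hP₀t ▸ norm_sub_lineCoord_smul_le A B P u
  have hf_line (u : ℝ) : f ‖P - (A + u • (B - A))‖ = |u - t| := by
    simp only [f, hP₀t, t, sqrt_norm_sub_add_smul_sq_sub_sq, mul_div_cancel_right₀ _ hL.ne']
  have hA : ‖P - P₀‖ ≤ ‖P - A‖ := by simpa using hmem 0
  have hB : ‖P - P₀‖ ≤ ‖P - B‖ := by simpa using hmem 1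
  have hfA : f ‖P - A‖ = |t| := by simpa using hf_line 0
  have hfB : f ‖P - B‖ = |1 - t| := by simpa using hf_line 1
  have hmin : f dmin = min |t| |1 - t| := by rw [hdmin, hf.monotoneOn.map_min hA hB, hfA, hfB]
  have hmax : f dmax = max |t| |1 - t| := by rw [hdmax, hf.monotoneOn.map_max hA hB, hfA, hfB]
  have hdmin_mem : dmin ∈ Ici ‖P - P₀‖ := by rw [hdmin]; exact le_min hA hB
  have hdmax_mem : dmax ∈ Ici ‖P - P₀‖ := by rw [hdmax]; exact le_max_of_le_left hA
  have hd_mem : d ∈ Ici ‖P - P₀‖ := le_trans hdmin_mem hd1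
  have hevent : {ω | ‖P - X ω‖ ≤ d} = U ⁻¹' closedBall t (f d) := by
    ext ω
    rw [mem_ofPred_eq, hX, ← hf.le_iff_le (hmem _) hd_mem, hf_line, mem_preimage, mem_closedBall,
      Real.dist_eq]
  rw [hevent, ← Measure.map_apply hU measurableSet_closedBall, hUnif,
    Measure.restrict_apply measurableSet_closedBall,
    volume_closedBall_inter_Icc_zero_one ht (hmin ▸ hf.monotoneOn hdmin_mem hd_mem hd1)
      (hmax ▸ hf.monotoneOn hd_mem hdmax_mem hd2), ← hmin, sub_div]

/-- CDF of the distance from `P` to a point uniform on segment `[A, B]` when the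
projection `P₀` of `P` onto line `(AB)` falls outside the segment:
for `d_min ≤ d ≤ d_max`,
`P(‖P - X‖ ≤ d) = (√(d² - ‖P-P₀‖²) - √(d_min² - ‖P-P₀‖²)) / ‖B - A‖`. -/
theorem cdf_dist_uniform_segment_proj_outside
    {Ω : Type*} [MeasurableSpace Ω] (μ : Measure Ω) [IsProbabilityMeasure μ]
    (A B P : EuclideanSpace ℝ (Fin 3)) (hAB : A ≠ B)
    (P₀ : EuclideanSpace ℝ (Fin 3))
    (hP₀ : P₀ = A + (⟪B - A, P - A⟫ / ‖B - A‖ ^ 2) • (B - A))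
    (hout : 0 < ⟪A - P₀, B - P₀⟫)
    (U : Ω → ℝ) (hU : Measurable U)
    (hUnif : Measure.map U μ = volume.restrict (Set.Icc (0 : ℝ) 1))
    (X : Ω → EuclideanSpace ℝ (Fin 3)) (hX : ∀ ω, X ω = A + U ω • (B - A))
    (dmin dmax : ℝ) (hdmin : dmin = min ‖P - A‖ ‖P - B‖)
    (hdmax : dmax = max ‖P - A‖ ‖P - B‖)
    (d : ℝ) (hd1 : dmin ≤ d) (hd2 : d ≤ dmax) :
    μ {ω | ‖P - X ω‖ ≤ d} =
      ENNReal.ofReal ((Real.sqrt (d ^ 2 - ‖P - P₀‖ ^ 2) -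
        Real.sqrt (dmin ^ 2 - ‖P - P₀‖ ^ 2)) / ‖B - A‖) :=
  cdf_dist_uniform_segment_proj_outside_general μ A B P hAB P₀ hP₀ hout U hU hUnif X hX dmin dmax
    hdmin hdmax d hd1 hd2
end

section
/- Let X be uniformly distributed on a segment [A,B] ⊂ ℝ³ with A ≠ B, let P ∈ ℝ³, and suppose the projection P₀ of P onto line (AB) lies in [A,B]. Set d_min = min(‖P-A‖₂, ‖P-B‖₂). Then for ‖P - P₀‖₂ ≤ d ≤ d_min, P(‖P - X‖₂ ≤ d) = 2√(d² - ‖P - P₀‖₂²)/‖B - A‖₂. -/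
open RealInnerProductSpace MeasureTheory Set

/-!
With `P₀ = A + t • (B - A)`, Pythagoras gives
`‖P - X‖² = ‖P - P₀‖² + (t - U)² ‖B - A‖²`, so `‖P - X‖ ≤ d` exactly when `U` lies in the
interval of radius `r = √(d² - ‖P - P₀‖²) / ‖B - A‖` around `t`. The sign condition on
`⟪A - P₀, B - P₀⟫ = -t (1 - t) ‖B - A‖²` says `t ∈ [0, 1]`, and `d ≤ ‖P - A‖, ‖P - B‖` says
`r ≤ t` and `r ≤ 1 - t`. So the interval lies in `[0, 1]`, and its probability is its length `2r`.
-/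

theorem abs_le_sqrt_sub_div_iff {h d L c : ℝ} (hL : 0 < L) (hhd : h ^ 2 ≤ d ^ 2) :
    |c| ≤ √(d ^ 2 - h ^ 2) / L ↔ h ^ 2 + c ^ 2 * L ^ 2 ≤ d ^ 2 := by
  rw [le_div_iff₀ hL, Real.le_sqrt (by positivity) (sub_nonneg.2 hhd), mul_pow, sq_abs,
    le_sub_iff_add_le']

theorem sqrt_sub_div_le_abs {h d L c : ℝ} (hL : 0 < L) (hdh : d ^ 2 ≤ h ^ 2 + c ^ 2 * L ^ 2) :
    √(d ^ 2 - h ^ 2) / L ≤ |c| := by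
  rw [div_le_iff₀ hL, Real.sqrt_le_left (by positivity), mul_pow, sq_abs]
  linarith

section Segment

variable {E : Type*} [NormedAddCommGroup E] [InnerProductSpace ℝ E]

/-- Pythagoras: `(⟪v, x⟫ / ‖v‖ ^ 2) • v` is the orthogonal projection of `x` onto `ℝ ∙ v`. -/
theorem norm_sub_smul_sq_eq (x v : E) (u : ℝ) :
    ‖x - u • v‖ ^ 2 =
      ‖x - (⟪v, x⟫ / ‖v‖ ^ 2) • v‖ ^ 2 + (⟪v, x⟫ / ‖v‖ ^ 2 - u) ^ 2 * ‖v‖ ^ 2 := by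
  set t := ⟪v, x⟫ / ‖v‖ ^ 2
  have horth : ⟪x - t • v, v⟫ = 0 := by
    rcases eq_or_ne v 0 with rfl | hv
    · simp
    rw [inner_sub_left, real_inner_smul_left, real_inner_self_eq_norm_sq, real_inner_comm,
      div_mul_cancel₀ _ (pow_ne_zero 2 (norm_ne_zero_iff.2 hv)), sub_self]
  have hsplit : x - u • v = (x - t • v) + (t - u) • v := by rw [sub_smul]; abel
  rw [hsplit, norm_add_sq_real, real_inner_smul_right, horth, norm_smul, mul_pow,
    Real.norm_eq_abs, sq_abs]
  ring

theorem mem_Icc_zero_one_of_inner_nonpos {A B : E} (hAB : A ≠ B) {t : ℝ}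
    (h : ⟪A - (A + t • (B - A)), B - (A + t • (B - A))⟫ ≤ 0) : t ∈ Icc (0 : ℝ) 1 := by
  have hA : A - (A + t • (B - A)) = (-t) • (B - A) := by rw [neg_smul]; abel
  have hB : B - (A + t • (B - A)) = (1 - t) • (B - A) := by rw [sub_smul, one_smul]; abel
  rw [hA, hB, real_inner_smul_left, real_inner_smul_right, real_inner_self_eq_norm_sq] at h
  have hpos : 0 < ‖B - A‖ ^ 2 := by positivity [sub_ne_zero.2 hAB.symm]
  have ht : 0 ≤ t * (1 - t) := by nlinarith
  constructor <;> nlinarith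

theorem setOf_norm_sub_smul_le_eq_Icc {x v : E} (hv : v ≠ 0) {d : ℝ}
    (hd : ‖x - (⟪v, x⟫ / ‖v‖ ^ 2) • v‖ ≤ d) :
    {u : ℝ | ‖x - u • v‖ ≤ d} =
      Icc (⟪v, x⟫ / ‖v‖ ^ 2 - √(d ^ 2 - ‖x - (⟪v, x⟫ / ‖v‖ ^ 2) • v‖ ^ 2) / ‖v‖)
        (⟪v, x⟫ / ‖v‖ ^ 2 + √(d ^ 2 - ‖x - (⟪v, x⟫ / ‖v‖ ^ 2) • v‖ ^ 2) / ‖v‖) := by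
  have hd0 : 0 ≤ d := (norm_nonneg _).trans hd
  ext u
  rw [← Real.closedBall_eq_Icc, Metric.mem_closedBall, Real.dist_eq, abs_sub_comm,
    abs_le_sqrt_sub_div_iff (norm_pos_iff.2 hv) (pow_le_pow_left₀ (norm_nonneg _) hd 2),
    ← norm_sub_smul_sq_eq, pow_le_pow_iff_left₀ (norm_nonneg _) hd0 two_ne_zero]
  rfl

theorem sqrt_sub_div_norm_le_abs_sub {x v : E} (hv : v ≠ 0) {d u : ℝ} (hd0 : 0 ≤ d)
    (hd : d ≤ ‖x - u • v‖) :
    √(d ^ 2 - ‖x - (⟪v, x⟫ / ‖v‖ ^ 2) • v‖ ^ 2) / ‖v‖ ≤ |⟪v, x⟫ / ‖v‖ ^ 2 - u| := by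
  refine sqrt_sub_div_le_abs (norm_pos_iff.2 hv) ?_
  rw [← norm_sub_smul_sq_eq]
  exact pow_le_pow_left₀ hd0 hd 2

end Segment

theorem measure_preimage_Icc_of_map_eq_uniform {Ω : Type*} [MeasurableSpace Ω] {μ : Measure Ω}
    {U : Ω → ℝ} (hU : Measurable U) (hUnif : μ.map U = volume.restrict (Icc (0 : ℝ) 1))
    {a b : ℝ} (ha : 0 ≤ a) (hb : b ≤ 1) : μ (U ⁻¹' Icc a b) = ENNReal.ofReal (b - a) := by
  rw [← Measure.map_apply hU measurableSet_Icc, hUnif, Measure.restrict_apply measurableSet_Icc,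
    inter_eq_left.2 (Icc_subset_Icc ha hb), Real.volume_Icc]

theorem cdf_dist_uniform_segment_proj_inside_general
    {Ω : Type*} [MeasurableSpace Ω] (μ : Measure Ω)
    (A B P : EuclideanSpace ℝ (Fin 3)) (hAB : A ≠ B)
    (P₀ : EuclideanSpace ℝ (Fin 3))
    (hP₀ : P₀ = A + (⟪B - A, P - A⟫ / ‖B - A‖ ^ 2) • (B - A))
    (hin : ⟪A - P₀, B - P₀⟫ ≤ 0)
    (U : Ω → ℝ) (hU : Measurable U)
    (hUnif : Measure.map U μ = volume.restrict (Set.Icc (0 : ℝ) 1))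
    (X : Ω → EuclideanSpace ℝ (Fin 3)) (hX : ∀ ω, X ω = A + U ω • (B - A))
    (dmin : ℝ) (hdmin : dmin = min ‖P - A‖ ‖P - B‖)
    (d : ℝ) (hd1 : ‖P - P₀‖ ≤ d) (hd2 : d ≤ dmin) :
    μ {ω | ‖P - X ω‖ ≤ d} =
      ENNReal.ofReal (2 * Real.sqrt (d ^ 2 - ‖P - P₀‖ ^ 2) / ‖B - A‖) := by
  have hv : B - A ≠ 0 := sub_ne_zero.2 hAB.symm
  have hd0 : 0 ≤ d := (norm_nonneg _).trans hd1
  have hPP₀ : P - P₀ = (P - A) - (⟪B - A, P - A⟫ / ‖B - A‖ ^ 2) • (B - A) := by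
    rw [hP₀]; abel
  have hline := setOf_norm_sub_smul_le_eq_Icc hv (hPP₀ ▸ hd1)
  have hrA := sqrt_sub_div_norm_le_abs_sub (x := P - A) (u := 0) hv hd0
    (by simpa using hd2.trans (hdmin ▸ min_le_left _ _))
  have hrB := sqrt_sub_div_norm_le_abs_sub (x := P - A) (u := 1) hv hd0
    (by simpa using hd2.trans (hdmin ▸ min_le_right _ _))
  rw [← hPP₀] at hline hrA hrB
  obtain ⟨ht0, ht1⟩ := mem_Icc_zero_one_of_inner_nonpos hAB (hP₀ ▸ hin)
  rw [sub_zero, abs_of_nonneg ht0] at hrA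
  rw [abs_of_nonpos (sub_nonpos.2 ht1)] at hrB
  have hset : {ω | ‖P - X ω‖ ≤ d} = U ⁻¹' {u | ‖(P - A) - u • (B - A)‖ ≤ d} := by
    simp_rw [hX, sub_add_eq_sub_sub]
    rfl
  rw [hset, hline, measure_preimage_Icc_of_map_eq_uniform hU hUnif (by linarith) (by linarith)]
  congr 1
  ring

/-- CDF of the distance from `P` to a point uniform on segment `[A, B]` when the
projection `P₀` of `P` onto line `(AB)` lies in the segment:
for `‖P - P₀‖ ≤ d ≤ d_min`, `P(‖P - X‖ ≤ d) = 2√(d² - ‖P-P₀‖²) / ‖B - A‖`. -/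
theorem cdf_dist_uniform_segment_proj_inside
    {Ω : Type*} [MeasurableSpace Ω] (μ : Measure Ω) [IsProbabilityMeasure μ]
    (A B P : EuclideanSpace ℝ (Fin 3)) (hAB : A ≠ B)
    (P₀ : EuclideanSpace ℝ (Fin 3))
    (hP₀ : P₀ = A + (⟪B - A, P - A⟫ / ‖B - A‖ ^ 2) • (B - A))
    (hin : ⟪A - P₀, B - P₀⟫ ≤ 0)
    (U : Ω → ℝ) (hU : Measurable U)
    (hUnif : Measure.map U μ = volume.restrict (Set.Icc (0 : ℝ) 1))
    (X : Ω → EuclideanSpace ℝ (Fin 3)) (hX : ∀ ω, X ω = A + U ω • (B - A))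
    (dmin : ℝ) (hdmin : dmin = min ‖P - A‖ ‖P - B‖)
    (d : ℝ) (hd1 : ‖P - P₀‖ ≤ d) (hd2 : d ≤ dmin) :
    μ {ω | ‖P - X ω‖ ≤ d} =
      ENNReal.ofReal (2 * Real.sqrt (d ^ 2 - ‖P - P₀‖ ^ 2) / ‖B - A‖) :=
  cdf_dist_uniform_segment_proj_inside_general μ A B P hAB P₀ hP₀ hin U hU hUnif X hX dmin hdmin d
    hd1 hd2
end
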